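/- Rank-1 low-high duality: for π: [0,T] → ℝ continuous, define the low transform (e^{-∞}·π)(t) = π(t) + log(1 - ∫₀ᵗ e^{-π}/∫₀ᵀ e^{-π}) for t ∈ [0,T), and the high transform (𝒯π)(t) = π(t) + log ∫₀ᵗ e^{-π} for t ∈ (0,T]. Then e^{-∞}(ι(π))(t) = ι-extension of 𝒯(π), i.e. for all t ∈ [0,T), (e^{-∞}·ι(π))(t) = 𝒯π(T-t) - 𝒯π(T), where ι(π)(t) = π(T-t) - π(T). -/

import Mathlib

/-! The substitution `s ↦ T - s` gives `∫₀ᵗ e^{-ι(π)} = e^{π(T)} ∫_{T-t}^T e^{-π}`, so the factor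
`e^{π(T)}` cancels in the low transform and `1 - ∫_{T-t}^T e^{-π} / ∫₀^T e^{-π}` becomes
`∫₀^{T-t} e^{-π} / ∫₀^T e^{-π}`, whose logarithm is the difference of the two high transforms. -/

open MeasureTheory

/-- The low transform `(e^{-∞}·π)(t) = π(t) + log(1 - ∫₀ᵗ e^{-π}/∫₀ᵀ e^{-π})`. -/
noncomputable def lowT (T : ℝ) (p : ℝ → ℝ) : ℝ → ℝ := fun t =>
  p t + Real.log (1 - (∫ s in (0:ℝ)..t, Real.exp (-p s)) /
    ∫ s in (0:ℝ)..T, Real.exp (-p s))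

/-- The high transform (rank-1 geometric Pitman transform)
`(𝒯π)(t) = π(t) + log ∫₀ᵗ e^{-π}`. -/
noncomputable def highT (p : ℝ → ℝ) : ℝ → ℝ := fun t =>
  p t + Real.log (∫ s in (0:ℝ)..t, Real.exp (-p s))

/-- Time reversal `ι(π)(t) = π(T-t) - π(T)`. -/
def iota (T : ℝ) (p : ℝ → ℝ) : ℝ → ℝ := fun t => p (T - t) - p T

lemma integral_exp_neg_iota (T : ℝ) (p : ℝ → ℝ) (u : ℝ) :
    ∫ s in (0:ℝ)..u, Real.exp (-iota T p s) =
      Real.exp (p T) * ∫ s in (T - u)..T, Real.exp (-p s) := by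
  have hexp : ∀ s, Real.exp (-iota T p s) = Real.exp (p T) * Real.exp (-p (T - s)) := by
    intro s
    rw [iota, ← Real.exp_add]
    ring_nf
  simp only [hexp, intervalIntegral.integral_const_mul,
    intervalIntegral.integral_comp_sub_left (fun s => Real.exp (-p s)), sub_zero]

lemma lowT_iota (T : ℝ) (p : ℝ → ℝ) (t : ℝ) :
    lowT T (iota T p) t = iota T p t + Real.log (1 -
      (∫ s in (T - t)..T, Real.exp (-p s)) / ∫ s in (0:ℝ)..T, Real.exp (-p s)) := by
  rw [lowT, integral_exp_neg_iota, integral_exp_neg_iota, sub_self,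
    mul_div_mul_left _ _ (Real.exp_pos _).ne']

lemma one_sub_integral_div_integral {f : ℝ → ℝ} {a b : ℝ}
    (hfb : IntervalIntegrable f volume 0 b) (hfa : IntervalIntegrable f volume 0 a)
    (ha : ∫ s in (0:ℝ)..a, f s ≠ 0) :
    1 - (∫ s in b..a, f s) / ∫ s in (0:ℝ)..a, f s =
      (∫ s in (0:ℝ)..b, f s) / ∫ s in (0:ℝ)..a, f s := by
  rw [← intervalIntegral.integral_add_adjacent_intervals hfb (hfb.symm.trans hfa)] at ha ⊢
  field_simp
  ring

lemma intervalIntegrable_exp_neg {p : ℝ → ℝ} {x : ℝ} (hx : 0 ≤ x)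
    (hp : ContinuousOn p (Set.Icc 0 x)) :
    IntervalIntegrable (fun s => Real.exp (-p s)) volume 0 x :=
  (hp.neg.rexp).intervalIntegrable_of_Icc hx

lemma integral_exp_neg_pos {p : ℝ → ℝ} {x : ℝ} (hx : 0 < x)
    (hp : ContinuousOn p (Set.Icc 0 x)) :
    0 < ∫ s in (0:ℝ)..x, Real.exp (-p s) :=
  intervalIntegral.intervalIntegral_pos_of_pos_on
    (intervalIntegrable_exp_neg hx.le hp) (fun _ _ => Real.exp_pos _) hx

theorem stmt_16 (T : ℝ) (hT : 0 < T) (p : ℝ → ℝ)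
    (hp : ContinuousOn p (Set.Icc 0 T)) :
    ∀ t ∈ Set.Ico (0:ℝ) T,
      lowT T (iota T p) t = highT p (T - t) - highT p T := by
  rintro t ⟨ht0, htT⟩
  have hTt : 0 < T - t := by linarith
  have hpTt : ContinuousOn p (Set.Icc 0 (T - t)) :=
    hp.mono (Set.Icc_subset_Icc_right (by linarith))
  have hIT := integral_exp_neg_pos hT hp
  have hITt := integral_exp_neg_pos hTt hpTt
  rw [lowT_iota, one_sub_integral_div_integral (intervalIntegrable_exp_neg hTt.le hpTt)
      (intervalIntegrable_exp_neg hT.le hp) hIT.ne',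
    Real.log_div hITt.ne' hIT.ne', iota, highT, highT]
  ring
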